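/- For 7/2 ≤ a ≤ 17/2, let ρ₄(a) be the 6×6 matrix (1/(8a+2)) · [[3a+1,0,0,0,2a−2,0],[0,a,0,0,0,2a−2],[0,0,0,0,0,0],[0,0,0,0,0,0],[2a−2,0,0,0,a,0],[0,2a−2,0,0,0,3a+1]]. Then ρ₄(a) is a 2⊗3 state and it violates the inequality D ≥ N², i.e., D(ρ₄(a)) < N(ρ₄(a))². -/

import Mathlib

open Matrix BigOperators Polynomial
open scoped Kronecker ComplexOrder

noncomputable section

/-- Squared Hilbert–Schmidt norm `‖C‖² = Tr(CᴴC)`. -/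
def hsNormSq {d : Type*} [Fintype d] (C : Matrix d d ℂ) : ℝ :=
  (Matrix.trace (Cᴴ * C)).re

/-- The square root of a positive semidefinite matrix, as `Matrix.PosSemidef.sqrt` was
defined in the older Mathlib. -/
def psdSqrtOld {d : Type*} [Fintype d] [DecidableEq d] {A : Matrix d d ℂ}
    (hA : A.PosSemidef) : Matrix d d ℂ :=
  hA.1.eigenvectorUnitary.1 * diagonal ((↑) ∘ (√·) ∘ hA.1.eigenvalues) *
  (star hA.1.eigenvectorUnitary : Matrix d d ℂ)

/-- Trace norm `‖X‖₁ = Tr √(XᴴX)`. -/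
def traceNorm {d : Type*} [Fintype d] [DecidableEq d] (X : Matrix d d ℂ) : ℝ :=
  ((psdSqrtOld (Matrix.posSemidef_conjTranspose_mul_self X)).trace).re

/-- Partial transpose on the first factor: `ρ^Γ((i,k),(j,l)) = ρ((j,k),(i,l))`. -/
def ptranspose {m n : ℕ} (ρ : Matrix (Fin m × Fin n) (Fin m × Fin n) ℂ) :
    Matrix (Fin m × Fin n) (Fin m × Fin n) ℂ :=
  Matrix.of fun p q => ρ (q.1, p.2) (p.1, q.2)

/-- Negativity `N(ρ) = (‖ρ^Γ‖₁ - 1)/(m-1)`. -/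
def negativity {m n : ℕ} (ρ : Matrix (Fin m × Fin n) (Fin m × Fin n) ℂ) : ℝ :=
  (traceNorm (ptranspose ρ) - 1) / ((m : ℝ) - 1)

/-- `ψ` is an orthonormal basis of `ℂ^m` (an orthonormal family of `m` vectors). -/
def IsONB {m : ℕ} (ψ : Fin m → (Fin m → ℂ)) : Prop :=
  ∀ k l, (∑ i, star (ψ k i) * ψ l i) = if k = l then 1 else 0

/-- The rank-one projector `|v⟩⟨v|`. -/
def proj {m : ℕ} (v : Fin m → ℂ) : Matrix (Fin m) (Fin m) ℂ :=
  Matrix.vecMulVec v (fun j => star (v j))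

/-- The von Neumann measurement map
`Π^A(ρ) = ∑ k, (|ψ_k⟩⟨ψ_k| ⊗ I_n) ρ (|ψ_k⟩⟨ψ_k| ⊗ I_n)`. -/
def piA {m n : ℕ} (ψ : Fin m → (Fin m → ℂ))
    (ρ : Matrix (Fin m × Fin n) (Fin m × Fin n) ℂ) :
    Matrix (Fin m × Fin n) (Fin m × Fin n) ℂ :=
  ∑ k, (proj (ψ k) ⊗ₖ (1 : Matrix (Fin n) (Fin n) ℂ)) * ρ *
       (proj (ψ k) ⊗ₖ (1 : Matrix (Fin n) (Fin n) ℂ))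

/-- Geometric discord
`D(ρ) = (m/(m-1)) · inf over von Neumann measurements of ‖ρ - Π^A(ρ)‖²`. -/
def gd {m n : ℕ} (ρ : Matrix (Fin m × Fin n) (Fin m × Fin n) ℂ) : ℝ :=
  ((m : ℝ) / ((m : ℝ) - 1)) *
    ⨅ ψ : {ψ : Fin m → (Fin m → ℂ) // IsONB ψ}, hsNormSq (ρ - piA ψ.1 ρ)

/-- An `m ⊗ n` state: positive semidefinite with trace one. -/
def IsState {m n : ℕ} (ρ : Matrix (Fin m × Fin n) (Fin m × Fin n) ℂ) : Prop :=
  ρ.PosSemidef ∧ ρ.trace = 1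

/-- Reindex a `6 × 6` matrix by `Fin 2 × Fin 3` with the ordering
`(1,1),(1,2),(1,3),(2,1),(2,2),(2,3)`. -/
def ofM6 (M : Matrix (Fin 6) (Fin 6) ℂ) :
    Matrix (Fin 2 × Fin 3) (Fin 2 × Fin 3) ℂ :=
  Matrix.of fun p q =>
    M ⟨p.1.val * 3 + p.2.val, by have := p.1.isLt; have := p.2.isLt; omega⟩
      ⟨q.1.val * 3 + q.2.val, by have := q.1.isLt; have := q.2.isLt; omega⟩

/-- The family of states `ρ₁(a,b)`. -/
def rho1 (a b : ℝ) : Matrix (Fin 2 × Fin 3) (Fin 2 × Fin 3) ℂ :=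
  ofM6 ((1 / (2 * ((a : ℂ)^2 + (b : ℂ)^2))) •
    !![(a:ℂ)^2, 0, 0, 0, (a:ℂ)*(b:ℂ), 0;
       0, (b:ℂ)^2, 0, 0, 0, (a:ℂ)*(b:ℂ);
       0, 0, 0, 0, 0, 0;
       0, 0, 0, 0, 0, 0;
       (a:ℂ)*(b:ℂ), 0, 0, 0, (b:ℂ)^2, 0;
       0, (a:ℂ)*(b:ℂ), 0, 0, 0, (a:ℂ)^2])

/-!
The state `ρ₄(a)` couples `|0,k⟩` only with `|1,k+1⟩`, and its partial transpose couples `|0,k⟩`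
only with `|1,k-1⟩`: after the reindexings `(i,k) ↦ (i,k-i)` and `(i,k) ↦ (i,k+i)` both are block
diagonal with real symmetric `2 × 2` blocks. This makes positivity of `ρ₄(a)` a `2 × 2` determinant
condition, and gives `‖ρ₄(a)^Γ‖₁` from the absolute value of an indefinite `2 × 2` matrix, so
`N = (2√(17a² - 32a + 16) - 2a)/(8a + 2)`. The computational-basis measurement removes exactly the
four entries `(2a - 2)/(8a + 2)` outside the diagonal blocks of the first factor, hence
`D ≤ 8((2a - 2)/(8a + 2))²`, which is smaller than `N²` as soon as `(2a - 2)² > 2a²`.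
-/

open scoped MatrixOrder

lemma posSemidef_fin_two_ofReal {α β γ : ℝ} (hα : 0 ≤ α) (hβ : 0 ≤ β) (h : γ ^ 2 ≤ α * β) :
    (!![(α : ℂ), γ; γ, β]).PosSemidef := by
  refine PosSemidef.of_dotProduct_mulVec_nonneg ?_ fun x => ?_
  · ext i j
    fin_cases i <;> fin_cases j <;> simp
  · have key : ∀ u v : ℝ, 0 ≤ α * u ^ 2 + 2 * γ * u * v + β * v ^ 2 := by
      intro u v
      have hsum : (α * u ^ 2 + 2 * γ * u * v + β * v ^ 2) * (α + β) =
          (α * u + γ * v) ^ 2 + (β * v + γ * u) ^ 2 + (α * β - γ ^ 2) * (u ^ 2 + v ^ 2) := by ring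
      rcases (add_nonneg hα hβ).eq_or_lt with h0 | hpos
      · have hα0 : α = 0 := by linarith
        have hβ0 : β = 0 := by linarith
        have hγ0 : γ = 0 := by subst hα0; nlinarith [sq_nonneg γ]
        simp [hα0, hβ0, hγ0]
      · refine nonneg_of_mul_nonneg_left (b := α + β) ?_ hpos
        rw [hsum]
        positivity
    refine Complex.nonneg_iff.2 ⟨?_, ?_⟩ <;> simp [dotProduct, mulVec, Fin.sum_univ_two]
    · nlinarith [key (x 0).re (x 1).re, key (x 0).im (x 1).im]
    · ring

lemma posSemidef_blockDiagonal {m o : Type*} [Fintype m] [Fintype o] [DecidableEq o]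
    {M : o → Matrix m m ℂ} (hM : ∀ k, (M k).PosSemidef) : (blockDiagonal M).PosSemidef := by
  refine PosSemidef.of_dotProduct_mulVec_nonneg
    (isHermitian_blockDiagonal_iff.2 fun k => (hM k).1) fun x => ?_
  have : star x ⬝ᵥ (blockDiagonal M *ᵥ x) =
      ∑ k, star (fun i => x (i, k)) ⬝ᵥ (M k *ᵥ fun i => x (i, k)) := by
    simp only [dotProduct, mulVec, Pi.star_apply, blockDiagonal_apply, ite_mul, zero_mul,
      Fintype.sum_prod_type, Finset.sum_ite_eq, Finset.mem_univ, ↓reduceIte, Finset.mul_sum]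
    exact Finset.sum_comm
  rw [this]
  exact Finset.sum_nonneg fun k _ => (hM k).dotProduct_mulVec_nonneg _

section TraceNorm

variable {d : Type*} [Fintype d] [DecidableEq d]

lemma psdSqrtOld_posSemidef {A : Matrix d d ℂ} (hA : A.PosSemidef) :
    (psdSqrtOld hA).PosSemidef :=
  (PosSemidef.diagonal fun i => by simp).mul_mul_conjTranspose_same _

lemma psdSqrtOld_mul_self {A : Matrix d d ℂ} (hA : A.PosSemidef) :
    psdSqrtOld hA * psdSqrtOld hA = A := by
  have hD : diagonal (((↑) : ℝ → ℂ) ∘ (√·) ∘ hA.1.eigenvalues) *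
      diagonal (((↑) : ℝ → ℂ) ∘ (√·) ∘ hA.1.eigenvalues) =
      diagonal (RCLike.ofReal ∘ hA.1.eigenvalues) := by
    rw [diagonal_mul_diagonal]
    congr 1; ext i
    simp [← Complex.ofReal_mul, Real.mul_self_sqrt (hA.eigenvalues_nonneg i)]
  conv_rhs => rw [hA.1.spectral_theorem, Unitary.conjStarAlgAut_apply, ← hD]
  simp only [psdSqrtOld, mul_assoc]
  rw [← mul_assoc (star _ : Matrix d d ℂ), Unitary.coe_star_mul_self, one_mul]

lemma traceNorm_eq_of_mul_self_eq {X S : Matrix d d ℂ} (hS : S.PosSemidef)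
    (h : S * S = Xᴴ * X) : traceNorm X = S.trace.re := by
  have hA := posSemidef_conjTranspose_mul_self X
  rw [traceNorm, (CFC.mul_self_eq_mul_self_iff _ _ (psdSqrtOld_posSemidef hA).nonneg hS.nonneg).1
    ((psdSqrtOld_mul_self hA).trans h.symm)]

lemma traceNorm_of_posSemidef {X : Matrix d d ℂ} (hX : X.PosSemidef) :
    traceNorm X = X.trace.re :=
  traceNorm_eq_of_mul_self_eq hX (by rw [hX.1.eq])

lemma traceNorm_ofReal_smul {c : ℝ} (hc : 0 ≤ c) (X : Matrix d d ℂ) :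
    traceNorm ((c : ℂ) • X) = c * traceNorm X := by
  have hA := posSemidef_conjTranspose_mul_self X
  rw [traceNorm_eq_of_mul_self_eq (S := (c : ℂ) • psdSqrtOld hA)
    ((psdSqrtOld_posSemidef hA).smul (by exact_mod_cast hc)),
    traceNorm, trace_smul, smul_eq_mul, Complex.re_ofReal_mul]
  rw [smul_mul_smul_comm, psdSqrtOld_mul_self, conjTranspose_smul, smul_mul_smul_comm,
    Complex.star_def, Complex.conj_ofReal]

lemma traceNorm_submatrix_equiv {d' : Type*} [Fintype d'] [DecidableEq d'] (X : Matrix d d ℂ)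
    (e : d' ≃ d) : traceNorm (X.submatrix e e) = traceNorm X := by
  have hA := posSemidef_conjTranspose_mul_self X
  rw [traceNorm_eq_of_mul_self_eq ((posSemidef_submatrix_equiv e).2 (psdSqrtOld_posSemidef hA)),
    traceNorm]
  · simp [trace, e.sum_comp (fun i => psdSqrtOld hA i i)]
  · rw [submatrix_mul_equiv, psdSqrtOld_mul_self, conjTranspose_submatrix, submatrix_mul_equiv]

lemma traceNorm_blockDiagonal {m : Type*} [Fintype m] [DecidableEq m] (X : d → Matrix m m ℂ) :
    traceNorm (blockDiagonal X) = ∑ k, traceNorm (X k) := by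
  have hA k := posSemidef_conjTranspose_mul_self (X k)
  rw [traceNorm_eq_of_mul_self_eq (posSemidef_blockDiagonal fun k => psdSqrtOld_posSemidef (hA k)),
    trace_blockDiagonal, Complex.re_sum]
  · rfl
  · rw [← blockDiagonal_mul, blockDiagonal_conjTranspose, ← blockDiagonal_mul]
    simp only [psdSqrtOld_mul_self]

end TraceNorm

lemma traceNorm_fin_two_ofReal {α β γ : ℝ} (h : α * β ≤ γ ^ 2) :
    traceNorm !![(α : ℂ), γ; γ, β] = √((α - β) ^ 2 + 4 * γ ^ 2) := by
  set s := √((α - β) ^ 2 + 4 * γ ^ 2) with hs_def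
  have hs : s ^ 2 = (α - β) ^ 2 + 4 * γ ^ 2 := Real.sq_sqrt (by positivity)
  rcases (Real.sqrt_nonneg _ : 0 ≤ s).eq_or_lt with hs0 | hspos
  · have hγ : γ = 0 := by nlinarith [sq_nonneg (α - β), sq_nonneg γ]
    have hαβ : α = β := by nlinarith [sq_nonneg (α - β), sq_nonneg γ]
    have hα : α = 0 := by subst hαβ; nlinarith
    rw [hs_def, ← hs0, hγ, ← hαβ, hα]
    have hzero : !![((0 : ℝ) : ℂ), ((0 : ℝ) : ℂ); ((0 : ℝ) : ℂ), ((0 : ℝ) : ℂ)] = 0 := by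
      ext i j; fin_cases i <;> fin_cases j <;> simp
    rw [hzero, traceNorm_of_posSemidef PosSemidef.zero, trace_zero, Complex.zero_re]
  have hs' : s ≠ 0 := hspos.ne'
  -- An indefinite `M` with eigenvalues `λ₊ ≥ 0 ≥ λ₋` has `|M| = (M² - (det M) • 1)/(λ₊ - λ₋)`,
  -- and `λ₊ - λ₋ = s`.
  rw [traceNorm_eq_of_mul_self_eq (S := !![(((α ^ 2 + 2 * γ ^ 2 - α * β) / s : ℝ) : ℂ),
      ((γ * (α + β) / s : ℝ) : ℂ); ((γ * (α + β) / s : ℝ) : ℂ),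
      (((β ^ 2 + 2 * γ ^ 2 - α * β) / s : ℝ) : ℂ)])]
  · rw [trace_fin_two]
    simp only [of_apply, cons_val', cons_val_zero, cons_val_one, empty_val', cons_val_fin_one]
    rw [← Complex.ofReal_add, Complex.ofReal_re]
    field_simp
    linear_combination (-1 : ℝ) * hs
  · apply posSemidef_fin_two_ofReal
    · exact div_nonneg (by nlinarith [sq_nonneg (α - β), sq_nonneg α, sq_nonneg β, sq_nonneg γ]) hspos.le
    · exact div_nonneg (by nlinarith [sq_nonneg (α - β), sq_nonneg α, sq_nonneg β, sq_nonneg γ]) hspos.le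
    · rw [div_pow, div_mul_div_comm, ← sq]
      gcongr
      nlinarith [mul_nonneg (sub_nonneg.2 h) (sq_nonneg s)]
  · have hsC : (s : ℂ) ^ 2 = ((α : ℂ) - β) ^ 2 + 4 * (γ : ℂ) ^ 2 := by exact_mod_cast hs
    have hsC' : (s : ℂ) ≠ 0 := by exact_mod_cast hs'
    ext i j
    fin_cases i <;> fin_cases j <;> simp [Matrix.mul_apply, Fin.sum_univ_two] <;> field_simp <;>
      simp only [hsC] <;> ring

lemma hsNormSq_nonneg {d : Type*} [Fintype d] (C : Matrix d d ℂ) : 0 ≤ hsNormSq C :=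
  (Complex.nonneg_iff.1 (posSemidef_conjTranspose_mul_self C).trace_nonneg).1

lemma hsNormSq_eq_sum_normSq {d : Type*} [Fintype d] (C : Matrix d d ℂ) :
    hsNormSq C = ∑ i, ∑ j, Complex.normSq (C i j) := by
  rw [Finset.sum_comm]
  simp [hsNormSq, trace, mul_apply, Complex.re_sum, Complex.normSq_apply]

lemma gd_le_of_isONB {m n : ℕ} (ρ : Matrix (Fin m × Fin n) (Fin m × Fin n) ℂ)
    {ψ : Fin m → Fin m → ℂ} (hψ : IsONB ψ) :
    gd ρ ≤ (m : ℝ) / (m - 1) * hsNormSq (ρ - piA ψ ρ) := by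
  have hbdd : BddBelow (Set.range fun φ : {φ // IsONB φ} => hsNormSq (ρ - piA φ.1 ρ)) :=
    ⟨0, by rintro _ ⟨φ, rfl⟩; exact hsNormSq_nonneg _⟩
  have hm : (0 : ℝ) ≤ m / (m - 1) := by
    rcases m with _ | m
    · simp
    · exact div_nonneg (Nat.cast_nonneg _) (by push_cast; linarith)
  exact mul_le_mul_of_nonneg_left (ciInf_le hbdd ⟨ψ, hψ⟩) hm

lemma isONB_single (m : ℕ) : IsONB fun k : Fin m => Pi.single k (1 : ℂ) := by
  intro k l
  simp [Pi.single_apply, eq_comm]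

lemma piA_single {m n : ℕ} (ρ : Matrix (Fin m × Fin n) (Fin m × Fin n) ℂ) :
    piA (fun k => Pi.single k 1) ρ = of fun p q => if p.1 = q.1 then ρ p q else 0 := by
  ext ⟨i, k⟩ ⟨j, l⟩
  by_cases h : i = j
  · subst h
    simp [piA, Matrix.sum_apply, Matrix.mul_apply, proj, vecMulVec_apply, Pi.single_apply,
      one_apply, Fintype.sum_prod_type]
  · simp [piA, Matrix.sum_apply, Matrix.mul_apply, proj, vecMulVec_apply, Pi.single_apply,
      one_apply, Fintype.sum_prod_type, h]

lemma two_mul_sq_lt_sq_sqrt_sub {a b : ℝ} (h : 2 * a ^ 2 < b ^ 2) :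
    2 * b ^ 2 < (√(a ^ 2 + 4 * b ^ 2) - a) ^ 2 := by
  set s := √(a ^ 2 + 4 * b ^ 2)
  have hs : s ^ 2 = a ^ 2 + 4 * b ^ 2 := Real.sq_sqrt (by positivity)
  have hs0 : 0 ≤ s := Real.sqrt_nonneg _
  have hlt : a * s < a ^ 2 + b ^ 2 := by
    refine abs_lt_of_sq_lt_sq' ?_ (by positivity) |>.2
    nlinarith
  nlinarith

def shearSub : Fin 2 × Fin 3 ≃ Fin 2 × Fin 3 :=
  Equiv.prodShear (Equiv.refl _) fun i => Equiv.subRight i.castSucc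

def shearAdd : Fin 2 × Fin 3 ≃ Fin 2 × Fin 3 :=
  Equiv.prodShear (Equiv.refl _) fun i => Equiv.addRight i.castSucc

def rho4 (a : ℝ) : Matrix (Fin 2 × Fin 3) (Fin 2 × Fin 3) ℂ :=
  ofM6 ((1 / (8 * (a : ℂ) + 2)) •
      !![3*(a:ℂ)+1, 0, 0, 0, 2*(a:ℂ)-2, 0;
         0, (a:ℂ), 0, 0, 0, 2*(a:ℂ)-2;
         0, 0, 0, 0, 0, 0;
         0, 0, 0, 0, 0, 0;
         2*(a:ℂ)-2, 0, 0, 0, (a:ℂ), 0;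
         0, 2*(a:ℂ)-2, 0, 0, 0, 3*(a:ℂ)+1])

def rho4Block (a : ℝ) : Fin 3 → Matrix (Fin 2) (Fin 2) ℂ
  | 0 => !![((3 * a + 1 : ℝ) : ℂ), ((2 * a - 2 : ℝ) : ℂ); ((2 * a - 2 : ℝ) : ℂ), (a : ℂ)]
  | 1 => !![(a : ℂ), ((2 * a - 2 : ℝ) : ℂ); ((2 * a - 2 : ℝ) : ℂ), ((3 * a + 1 : ℝ) : ℂ)]
  | 2 => 0

def rho4PtBlock (a : ℝ) : Fin 3 → Matrix (Fin 2) (Fin 2) ℂ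
  | 0 => !![((3 * a + 1 : ℝ) : ℂ), ((0 : ℝ) : ℂ); ((0 : ℝ) : ℂ), ((3 * a + 1 : ℝ) : ℂ)]
  | 1 => !![(a : ℂ), ((2 * a - 2 : ℝ) : ℂ); ((2 * a - 2 : ℝ) : ℂ), ((0 : ℝ) : ℂ)]
  | 2 => !![((0 : ℝ) : ℂ), ((2 * a - 2 : ℝ) : ℂ); ((2 * a - 2 : ℝ) : ℂ), (a : ℂ)]

lemma rho4_eq_blockDiagonal (a : ℝ) :
    rho4 a = (((8 * a + 2)⁻¹ : ℝ) : ℂ) •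
      (blockDiagonal (rho4Block a)).submatrix shearSub shearSub := by
  ext ⟨i, k⟩ ⟨j, l⟩
  fin_cases i <;> fin_cases k <;> fin_cases j <;> fin_cases l <;>
    simp [rho4, ofM6, rho4Block, shearSub, blockDiagonal_apply, div_eq_inv_mul,
      show (-1 : Fin 3) = 2 from rfl]

lemma ptranspose_rho4 (a : ℝ) :
    ptranspose (rho4 a) = (((8 * a + 2)⁻¹ : ℝ) : ℂ) •
      (blockDiagonal (rho4PtBlock a)).submatrix shearAdd shearAdd := by
  ext ⟨i, k⟩ ⟨j, l⟩
  fin_cases i <;> fin_cases k <;> fin_cases j <;> fin_cases l <;>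
    simp [rho4, ptranspose, ofM6, rho4PtBlock, shearAdd, blockDiagonal_apply, div_eq_inv_mul]

lemma rho4_posSemidef {a : ℝ} (h : (2 * a - 2) ^ 2 ≤ a * (3 * a + 1)) : (rho4 a).PosSemidef := by
  have ha : 0 ≤ a := by nlinarith
  rw [rho4_eq_blockDiagonal]
  refine PosSemidef.smul ?_ (by norm_cast; positivity)
  refine (posSemidef_submatrix_equiv _).2 (posSemidef_blockDiagonal fun k => ?_)
  fin_cases k
  · exact posSemidef_fin_two_ofReal (by positivity) ha (by linarith)
  · exact posSemidef_fin_two_ofReal ha (by positivity) (by linarith)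
  · exact PosSemidef.zero

lemma trace_rho4 {a : ℝ} (ha : 8 * a + 2 ≠ 0) : (rho4 a).trace = 1 := by
  have ha' : 8 * (a : ℂ) + 2 ≠ 0 := by exact_mod_cast ha
  simp [trace, rho4, ofM6, Fintype.sum_prod_type, Fin.sum_univ_succ]
  field_simp
  ring

lemma negativity_rho4 {a : ℝ} (ha : 0 ≤ a) :
    negativity (rho4 a) = (2 * √(a ^ 2 + 4 * (2 * a - 2) ^ 2) - 2 * a) / (8 * a + 2) := by
  have hblock0 := posSemidef_fin_two_ofReal (γ := 0) (by positivity : 0 ≤ 3 * a + 1)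
    (by positivity : 0 ≤ 3 * a + 1) (by nlinarith)
  rw [negativity, ptranspose_rho4, traceNorm_ofReal_smul (by positivity),
    traceNorm_submatrix_equiv, traceNorm_blockDiagonal, Fin.sum_univ_three]
  simp only [rho4PtBlock]
  rw [traceNorm_of_posSemidef hblock0, traceNorm_fin_two_ofReal (by nlinarith),
    traceNorm_fin_two_ofReal (by nlinarith), sub_zero, zero_sub, neg_sq]
  simp [trace_fin_two]
  field_simp
  ring

lemma hsNormSq_rho4_sub_piA_single (a : ℝ) :
    hsNormSq (rho4 a - piA (fun k => Pi.single k 1) (rho4 a)) =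
      4 * ((2 * a - 2) / (8 * a + 2)) ^ 2 := by
  rw [piA_single, hsNormSq_eq_sum_normSq]
  simp [Fintype.sum_prod_type, Fin.sum_univ_succ, rho4, ofM6, Complex.normSq_apply]
  ring

theorem stmt16 (a : ℝ) (ha0 : 7/2 ≤ a) (ha1 : a ≤ 17/2)
    (ρ : Matrix (Fin 2 × Fin 3) (Fin 2 × Fin 3) ℂ)
    (hρ : ρ = ofM6 ((1 / (8 * (a : ℂ) + 2)) •
      !![3*(a:ℂ)+1, 0, 0, 0, 2*(a:ℂ)-2, 0;
         0, (a:ℂ), 0, 0, 0, 2*(a:ℂ)-2;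
         0, 0, 0, 0, 0, 0;
         0, 0, 0, 0, 0, 0;
         2*(a:ℂ)-2, 0, 0, 0, (a:ℂ), 0;
         0, 2*(a:ℂ)-2, 0, 0, 0, 3*(a:ℂ)+1])) :
    IsState ρ ∧ gd ρ < negativity ρ ^ 2 := by
  obtain rfl : ρ = rho4 a := hρ
  refine ⟨⟨rho4_posSemidef (by nlinarith), trace_rho4 (by positivity)⟩, ?_⟩
  calc gd (rho4 a) ≤ 2 * (4 * ((2 * a - 2) / (8 * a + 2)) ^ 2) := by
        have := gd_le_of_isONB (rho4 a) (isONB_single 2)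
        rw [hsNormSq_rho4_sub_piA_single] at this
        norm_num at this
        linarith
    _ < ((2 * √(a ^ 2 + 4 * (2 * a - 2) ^ 2) - 2 * a) / (8 * a + 2)) ^ 2 := by
        rw [div_pow, div_pow, ← mul_assoc, mul_div_assoc']
        gcongr
        nlinarith [two_mul_sq_lt_sq_sqrt_sub (a := a) (b := 2 * a - 2) (by nlinarith)]
    _ = negativity (rho4 a) ^ 2 := by rw [negativity_rho4 (by linarith)]

end
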